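/- Let Z = f(X) be a deterministic function of X, and let Y_1,...,Y_N be mutually conditionally independent given X. Then the set function A ↦ I(X; Y_A | Z) is submodular on subsets of {1,...,N}. -/

import Mathlib

/-! Because `Z = f(X)`, `I(X ; Y_A | Z) = H(Y_A | Z) - H(Y_A | X)`. Conditional independence
given `X` turns the chain rule into `H(Y_A | X) = ∑ i ∈ A, H(Y_i | X)`, which is modular in `A`,
while `A ↦ H(Y_A | Z)` is submodular for every `Z`: this is strong subadditivity
`H(U, W, V) + H(V) ≤ H(U, V) + H(W, V)` applied to `U = Y_A`, `W = Y_B`, `V = (Y_{A ∩ B}, Z)`,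
and strong subadditivity is Gibbs' inequality against `P(u, v) Q(w, v) / R(v)`. -/

open Finset

/-- A probability distribution on a finite sample space, given by weights. -/
structure DiscProb (Ω : Type) [Fintype Ω] where
  w : Ω → ℝ
  nonneg : ∀ ω, 0 ≤ w ω
  sum_one : ∑ ω, w ω = 1

namespace DiscProb

variable {Ω : Type} [Fintype Ω]

/-- Probability that the discrete random variable `X` takes the value `a`. -/
noncomputable def prob (μ : DiscProb Ω) {α : Type} [DecidableEq α]
    (X : Ω → α) (a : α) : ℝ :=
  ∑ ω ∈ Finset.univ.filter (fun ω => X ω = a), μ.w ω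

/-- Shannon entropy of a discrete random variable. -/
noncomputable def entropy (μ : DiscProb Ω) {α : Type} [Fintype α] [DecidableEq α]
    (X : Ω → α) : ℝ :=
  -∑ a : α, μ.prob X a * Real.log (μ.prob X a)

/-- Conditional Shannon entropy `H(X | Y) = H(X, Y) - H(Y)`. -/
noncomputable def condEntropy (μ : DiscProb Ω) {α β : Type}
    [Fintype α] [DecidableEq α] [Fintype β] [DecidableEq β]
    (X : Ω → α) (Y : Ω → β) : ℝ :=
  μ.entropy (fun ω => (X ω, Y ω)) - μ.entropy Y

/-- Mutual information `I(X ; Y) = H(X) + H(Y) - H(X, Y)`. -/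
noncomputable def mutualInfo (μ : DiscProb Ω) {α β : Type}
    [Fintype α] [DecidableEq α] [Fintype β] [DecidableEq β]
    (X : Ω → α) (Y : Ω → β) : ℝ :=
  μ.entropy X + μ.entropy Y - μ.entropy (fun ω => (X ω, Y ω))

/-- Conditional mutual information
`I(X ; Y | Z) = H(X,Z) + H(Y,Z) - H(X,Y,Z) - H(Z)`. -/
noncomputable def condMutualInfo (μ : DiscProb Ω) {α β γ : Type}
    [Fintype α] [DecidableEq α] [Fintype β] [DecidableEq β]
    [Fintype γ] [DecidableEq γ]
    (X : Ω → α) (Y : Ω → β) (Z : Ω → γ) : ℝ :=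
  μ.entropy (fun ω => (X ω, Z ω)) + μ.entropy (fun ω => (Y ω, Z ω))
    - μ.entropy (fun ω => (X ω, Y ω, Z ω)) - μ.entropy Z

end DiscProb

/-- The joint random variable `Y_A = (Y_i)_{i ∈ A}` of a family of random variables. -/
def jointObs {Ω ι : Type} {𝒪 : ι → Type} (Y : ∀ i, Ω → 𝒪 i) (A : Finset ι) :
    Ω → ((i : A) → 𝒪 i.1) := fun ω i => Y i.1 ω

/-- The random variables `Y_i, i ∈ ι` are mutually conditionally independent given `X`:
for every finite subset `A`, `P(Y_A = y | X = x) = ∏_{i ∈ A} P(Y_i = y_i | X = x)`,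
written in a division-free form. -/
def iCondIndepGiven {Ω : Type} [Fintype Ω] {α ι : Type} [DecidableEq α]
    {𝒪 : ι → Type} [∀ i, DecidableEq (𝒪 i)] (μ : DiscProb Ω)
    (X : Ω → α) (Y : ∀ i, Ω → 𝒪 i) : Prop :=
  ∀ (A : Finset ι) (y : (i : A) → 𝒪 i.1) (x : α),
    μ.prob (fun ω => (jointObs Y A ω, X ω)) (y, x) * (μ.prob X x) ^ A.card
      = μ.prob X x * ∏ i : A, μ.prob (fun ω => (Y i.1 ω, X ω)) (y i, x)

/-- `Y₁` and `Y₂` are conditionally independent given `X`: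
`P(Y₁ = y₁, Y₂ = y₂ | X = x) = P(Y₁ = y₁ | X = x) ⬝ P(Y₂ = y₂ | X = x)`,
written in a division-free form. -/
def pairCondIndepGiven {Ω : Type} [Fintype Ω] {α β γ : Type}
    [DecidableEq α] [DecidableEq β] [DecidableEq γ] (μ : DiscProb Ω)
    (Y₁ : Ω → β) (Y₂ : Ω → γ) (X : Ω → α) : Prop :=
  ∀ (y₁ : β) (y₂ : γ) (x : α),
    μ.prob (fun ω => (Y₁ ω, Y₂ ω, X ω)) (y₁, y₂, x) * μ.prob X x
      = μ.prob (fun ω => (Y₁ ω, X ω)) (y₁, x) * μ.prob (fun ω => (Y₂ ω, X ω)) (y₂, x)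

variable {Ω α : Type} [Fintype Ω] [Fintype α] [DecidableEq α]
  {N : ℕ} {𝒪 : Fin N → Type} [∀ i, Fintype (𝒪 i)] [∀ i, DecidableEq (𝒪 i)]

lemma Real.mul_log_sub_mul_log_le {p q : ℝ} (hp : 0 ≤ p) (hq : 0 ≤ q) (hpq : 0 < p → 0 < q) :
    p * Real.log q - p * Real.log p ≤ q - p := by
  rcases hp.eq_or_lt with rfl | hp
  · simpa using hq
  have hq := hpq hp
  calc p * Real.log q - p * Real.log p = p * Real.log (q / p) := by
        rw [Real.log_div hq.ne' hp.ne']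
        ring
    _ ≤ p * (q / p - 1) :=
        mul_le_mul_of_nonneg_left (Real.log_le_sub_one_of_pos (div_pos hq hp)) hp.le
    _ = q - p := by field_simp

lemma jointObs_eq_jointObs_iff {Ω ι : Type} {𝒴 : ι → Type} (Y : ∀ i, Ω → 𝒴 i) (A : Finset ι)
    (ω ω' : Ω) : jointObs Y A ω = jointObs Y A ω' ↔ ∀ i ∈ A, Y i ω = Y i ω' := by
  simp [jointObs, funext_iff]

namespace DiscProb

variable (μ : DiscProb Ω)

lemma prob_nonneg {β : Type} [DecidableEq β] (X : Ω → β) (b : β) : 0 ≤ μ.prob X b :=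
  Finset.sum_nonneg fun ω _ => μ.nonneg ω

lemma w_le_prob {β : Type} [DecidableEq β] (X : Ω → β) (ω : Ω) : μ.w ω ≤ μ.prob X (X ω) :=
  Finset.single_le_sum (fun ω' _ => μ.nonneg ω') (by simp)

lemma prob_le_prob_comp {β γ : Type} [DecidableEq β] [DecidableEq γ] (X : Ω → β) (g : β → γ)
    (b : β) : μ.prob X b ≤ μ.prob (fun ω => g (X ω)) (g b) :=
  Finset.sum_le_sum_of_subset_of_nonneg
    (Finset.monotone_filter_right _ fun _ _ h => congrArg g h) fun ω _ _ => μ.nonneg ω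

lemma sum_prob_mul {β : Type} [Fintype β] [DecidableEq β] (X : Ω → β) (F : β → ℝ) :
    ∑ b, μ.prob X b * F b = ∑ ω, μ.w ω * F (X ω) := by
  rw [← Finset.sum_fiberwise Finset.univ X fun ω => μ.w ω * F (X ω)]
  refine Finset.sum_congr rfl fun b _ => ?_
  rw [prob, Finset.sum_mul]
  exact Finset.sum_congr rfl fun ω hω => by rw [(Finset.mem_filter.mp hω).2]

lemma sum_prob {β : Type} [Fintype β] [DecidableEq β] (X : Ω → β) : ∑ b, μ.prob X b = 1 := by
  simpa [μ.sum_one] using μ.sum_prob_mul X fun _ => 1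

lemma sum_prob_prod_left {β γ : Type} [Fintype β] [DecidableEq β] [DecidableEq γ]
    (U : Ω → β) (V : Ω → γ) (c : γ) :
    ∑ b, μ.prob (fun ω => (U ω, V ω)) (b, c) = μ.prob V c := by
  simp only [prob, Finset.sum_filter, Prod.mk.injEq]
  rw [Finset.sum_comm]
  refine Finset.sum_congr rfl fun ω _ => ?_
  by_cases h : V ω = c <;> simp [h]

lemma entropy_eq_neg_sum_w_mul_log {β : Type} [Fintype β] [DecidableEq β] (X : Ω → β) :
    μ.entropy X = -∑ ω, μ.w ω * Real.log (μ.prob X (X ω)) := by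
  rw [entropy, sum_prob_mul]

lemma entropy_congr {β γ : Type} [Fintype β] [DecidableEq β] [Fintype γ] [DecidableEq γ]
    (X : Ω → β) (X' : Ω → γ) (h : ∀ ω ω', X ω = X ω' ↔ X' ω = X' ω') :
    μ.entropy X = μ.entropy X' := by
  simp only [entropy_eq_neg_sum_w_mul_log, prob, h]

theorem entropy_le_neg_sum_prob_mul_log {β : Type} [Fintype β] [DecidableEq β] (X : Ω → β)
    {q : β → ℝ} (hq : ∀ b, 0 ≤ q b) (hq_sum : ∑ b, q b ≤ 1)
    (hpos : ∀ b, 0 < μ.prob X b → 0 < q b) :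
    μ.entropy X ≤ -∑ b, μ.prob X b * Real.log (q b) := by
  have key : ∑ b, (μ.prob X b * Real.log (q b) - μ.prob X b * Real.log (μ.prob X b))
      ≤ ∑ b, (q b - μ.prob X b) :=
    Finset.sum_le_sum fun b _ =>
      Real.mul_log_sub_mul_log_le (μ.prob_nonneg X b) (hq b) (hpos b)
  rw [Finset.sum_sub_distrib, Finset.sum_sub_distrib, sum_prob] at key
  rw [entropy]
  linarith

lemma sum_prob_mul_prob_div_prob {β γ δ : Type} [Fintype β] [DecidableEq β]
    [Fintype γ] [DecidableEq γ] [Fintype δ] [DecidableEq δ]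
    (U : Ω → β) (W : Ω → γ) (V : Ω → δ) :
    ∑ t : β × γ × δ, μ.prob (fun ω => (U ω, V ω)) (t.1, t.2.2)
      * μ.prob (fun ω => (W ω, V ω)) t.2 / μ.prob V t.2.2 = 1 := by
  calc _ = ∑ v, (∑ u, μ.prob (fun ω => (U ω, V ω)) (u, v))
        * (∑ w, μ.prob (fun ω => (W ω, V ω)) (w, v)) / μ.prob V v := by
        simp_rw [Fintype.sum_prod_type, Finset.sum_mul_sum, Finset.sum_div]
        exact (Finset.sum_congr rfl fun _ _ => Finset.sum_comm).trans Finset.sum_comm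
    _ = ∑ v, μ.prob V v * μ.prob V v / μ.prob V v := by simp only [sum_prob_prod_left]
    _ = 1 := by simp only [mul_self_div_self, sum_prob]

theorem entropy_triple_add_entropy_le {β γ δ : Type} [Fintype β] [DecidableEq β]
    [Fintype γ] [DecidableEq γ] [Fintype δ] [DecidableEq δ]
    (U : Ω → β) (W : Ω → γ) (V : Ω → δ) :
    μ.entropy (fun ω => (U ω, W ω, V ω)) + μ.entropy V
      ≤ μ.entropy (fun ω => (U ω, V ω)) + μ.entropy (fun ω => (W ω, V ω)) := by
  set P := μ.prob (fun ω => (U ω, V ω))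
  set Q := μ.prob (fun ω => (W ω, V ω))
  set R := μ.prob V
  -- `q` is the law of `(U, W, V)` under which `U` and `W` are conditionally independent given `V`
  set q : β × γ × δ → ℝ := fun t => P (t.1, t.2.2) * Q t.2 / R t.2.2
  have hq : ∀ t, 0 ≤ q t := fun t =>
    div_nonneg (mul_nonneg (μ.prob_nonneg _ _) (μ.prob_nonneg _ _)) (μ.prob_nonneg _ _)
  have hpos : ∀ t, 0 < μ.prob (fun ω => (U ω, W ω, V ω)) t → 0 < q t := by
    rintro ⟨u, w, v⟩ ht
    have hP : 0 < P (u, v) :=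
      ht.trans_le (μ.prob_le_prob_comp _ (fun t : β × γ × δ => (t.1, t.2.2)) _)
    have hQ : 0 < Q (w, v) := ht.trans_le (μ.prob_le_prob_comp _ Prod.snd _)
    have hR : 0 < R v := hQ.trans_le (μ.prob_le_prob_comp _ Prod.snd _)
    positivity
  have hlog : ∀ ω, μ.w ω * Real.log (q (U ω, W ω, V ω)) = μ.w ω * Real.log (P (U ω, V ω))
      + μ.w ω * Real.log (Q (W ω, V ω)) - μ.w ω * Real.log (R (V ω)) := by
    intro ω
    rcases (μ.nonneg ω).eq_or_lt with h0 | hw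
    · simp [← h0]
    have hP : 0 < P (U ω, V ω) := hw.trans_le (μ.w_le_prob _ ω)
    have hQ : 0 < Q (W ω, V ω) := hw.trans_le (μ.w_le_prob _ ω)
    have hR : 0 < R (V ω) := hw.trans_le (μ.w_le_prob _ ω)
    rw [Real.log_div (by positivity) hR.ne', Real.log_mul hP.ne' hQ.ne']
    ring
  have hcross : -∑ t, μ.prob (fun ω => (U ω, W ω, V ω)) t * Real.log (q t)
      = μ.entropy (fun ω => (U ω, V ω)) + μ.entropy (fun ω => (W ω, V ω)) - μ.entropy V := by
    simp only [sum_prob_mul, entropy_eq_neg_sum_w_mul_log, hlog, Finset.sum_sub_distrib,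
      Finset.sum_add_distrib]
    ring
  linarith [μ.entropy_le_neg_sum_prob_mul_log _ hq (μ.sum_prob_mul_prob_div_prob U W V).le hpos]

lemma condEntropy_eq_neg_sum_w_mul_log {β γ : Type} [Fintype β] [DecidableEq β]
    [Fintype γ] [DecidableEq γ] (Y : Ω → γ) (X : Ω → β) :
    μ.condEntropy Y X = -∑ ω, μ.w ω * (Real.log (μ.prob (fun ω => (Y ω, X ω)) (Y ω, X ω))
      - Real.log (μ.prob X (X ω))) := by
  simp only [condEntropy, entropy_eq_neg_sum_w_mul_log, mul_sub, Finset.sum_sub_distrib]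
  ring

theorem condMutualInfo_comp_eq_condEntropy_sub_condEntropy {β γ δ : Type}
    [Fintype β] [DecidableEq β] [Fintype γ] [DecidableEq γ] [Fintype δ] [DecidableEq δ]
    (X : Ω → β) (Y : Ω → γ) (f : β → δ) :
    μ.condMutualInfo X Y (fun ω => f (X ω))
      = μ.condEntropy Y (fun ω => f (X ω)) - μ.condEntropy Y X := by
  have hX : μ.entropy (fun ω => (X ω, f (X ω))) = μ.entropy X :=
    μ.entropy_congr _ _ fun ω ω' => by
      simp only [Prod.mk.injEq, and_iff_left_iff_imp]
      exact congrArg f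
  have hXY : μ.entropy (fun ω => (X ω, Y ω, f (X ω))) = μ.entropy (fun ω => (Y ω, X ω)) :=
    μ.entropy_congr _ _ fun ω ω' => by
      simp only [Prod.mk.injEq]
      exact ⟨fun h => ⟨h.2.1, h.1⟩, fun h => ⟨h.2, h.1, congrArg f h.2⟩⟩
  rw [condMutualInfo, condEntropy, condEntropy, hX, hXY]
  ring

variable {ι : Type} {𝒴 : ι → Type} [∀ i, DecidableEq (𝒴 i)]

theorem condEntropy_jointObs_union_add_inter_le [DecidableEq ι] [∀ i, Fintype (𝒴 i)]
    {β : Type} [Fintype β] [DecidableEq β] (Y : ∀ i, Ω → 𝒴 i) (Z : Ω → β) (A B : Finset ι) :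
    μ.condEntropy (jointObs Y (A ∪ B)) Z + μ.condEntropy (jointObs Y (A ∩ B)) Z
      ≤ μ.condEntropy (jointObs Y A) Z + μ.condEntropy (jointObs Y B) Z := by
  have hAB : μ.entropy (fun ω => (jointObs Y A ω, jointObs Y B ω, jointObs Y (A ∩ B) ω, Z ω))
      = μ.entropy (fun ω => (jointObs Y (A ∪ B) ω, Z ω)) :=
    μ.entropy_congr _ _ fun ω ω' => by
      simp only [Prod.mk.injEq, jointObs_eq_jointObs_iff, Finset.mem_union, Finset.mem_inter]
      aesop
  have hA : μ.entropy (fun ω => (jointObs Y A ω, jointObs Y (A ∩ B) ω, Z ω))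
      = μ.entropy (fun ω => (jointObs Y A ω, Z ω)) :=
    μ.entropy_congr _ _ fun ω ω' => by
      simp only [Prod.mk.injEq, jointObs_eq_jointObs_iff, Finset.mem_inter]
      aesop
  have hB : μ.entropy (fun ω => (jointObs Y B ω, jointObs Y (A ∩ B) ω, Z ω))
      = μ.entropy (fun ω => (jointObs Y B ω, Z ω)) :=
    μ.entropy_congr _ _ fun ω ω' => by
      simp only [Prod.mk.injEq, jointObs_eq_jointObs_iff, Finset.mem_inter]
      aesop
  have := μ.entropy_triple_add_entropy_le (jointObs Y A) (jointObs Y B)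
    fun ω => (jointObs Y (A ∩ B) ω, Z ω)
  simp only [condEntropy]
  linarith

lemma log_condProb_jointObs_eq_sum {β : Type} [DecidableEq β] {X : Ω → β}
    {Y : ∀ i, Ω → 𝒴 i} (hCI : iCondIndepGiven μ X Y) (S : Finset ι) {ω : Ω} (hω : 0 < μ.w ω) :
    Real.log (μ.prob (fun ω => (jointObs Y S ω, X ω)) (jointObs Y S ω, X ω))
        - Real.log (μ.prob X (X ω))
      = ∑ i ∈ S, (Real.log (μ.prob (fun ω => (Y i ω, X ω)) (Y i ω, X ω))
        - Real.log (μ.prob X (X ω))) := by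
  have hX : 0 < μ.prob X (X ω) := hω.trans_le (μ.w_le_prob _ ω)
  have hS : 0 < μ.prob (fun ω => (jointObs Y S ω, X ω)) (jointObs Y S ω, X ω) :=
    hω.trans_le (μ.w_le_prob _ ω)
  have hY : ∀ i : S, 0 < μ.prob (fun ω => (Y i ω, X ω)) (Y i ω, X ω) :=
    fun i => hω.trans_le (μ.w_le_prob _ ω)
  have hfactor : μ.prob (fun ω => (jointObs Y S ω, X ω)) (jointObs Y S ω, X ω)
        * μ.prob X (X ω) ^ S.card
      = μ.prob X (X ω) * ∏ i : S, μ.prob (fun ω => (Y i ω, X ω)) (Y i ω, X ω) :=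
    hCI S (jointObs Y S ω) (X ω)
  have h := congrArg Real.log hfactor
  rw [Real.log_mul hS.ne' (pow_pos hX _).ne', Real.log_pow,
    Real.log_mul hX.ne' (Finset.prod_pos fun i _ => hY i).ne',
    Real.log_prod fun i _ => (hY i).ne', Finset.sum_coe_sort S
      fun i => Real.log (μ.prob (fun ω => (Y i ω, X ω)) (Y i ω, X ω))] at h
  rw [Finset.sum_sub_distrib, Finset.sum_const, nsmul_eq_mul]
  linarith

theorem condEntropy_jointObs_eq_sum [DecidableEq ι] [∀ i, Fintype (𝒴 i)] {β : Type}
    [Fintype β] [DecidableEq β] {X : Ω → β} {Y : ∀ i, Ω → 𝒴 i} (hCI : iCondIndepGiven μ X Y)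
    (S : Finset ι) : μ.condEntropy (jointObs Y S) X = ∑ i ∈ S, μ.condEntropy (Y i) X := by
  have hω : ∀ ω, μ.w ω
        * (Real.log (μ.prob (fun ω => (jointObs Y S ω, X ω)) (jointObs Y S ω, X ω))
          - Real.log (μ.prob X (X ω)))
      = ∑ i ∈ S, μ.w ω * (Real.log (μ.prob (fun ω => (Y i ω, X ω)) (Y i ω, X ω))
        - Real.log (μ.prob X (X ω))) := by
    intro ω
    rcases (μ.nonneg ω).eq_or_lt with h0 | hw
    · simp [← h0]
    rw [μ.log_condProb_jointObs_eq_sum hCI S hw, Finset.mul_sum]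
  simp only [condEntropy_eq_neg_sum_w_mul_log, hω]
  rw [Finset.sum_comm, Finset.sum_neg_distrib]

end DiscProb

/-- for `Z = f(X)` and `Y_i` mutually conditionally independent given `X`,
the set function `A ↦ I(X ; Y_A | Z)` is submodular. -/
theorem condMutualInfo_given_secret_submodular {γ : Type} [Fintype γ] [DecidableEq γ]
    (μ : DiscProb Ω) (X : Ω → α) (f : α → γ) (Y : ∀ i, Ω → 𝒪 i)
    (hCI : iCondIndepGiven μ X Y) (A B : Finset (Fin N)) :
    μ.condMutualInfo X (jointObs Y (A ∪ B)) (fun ω => f (X ω))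
        + μ.condMutualInfo X (jointObs Y (A ∩ B)) (fun ω => f (X ω))
      ≤ μ.condMutualInfo X (jointObs Y A) (fun ω => f (X ω))
        + μ.condMutualInfo X (jointObs Y B) (fun ω => f (X ω)) := by
  simp only [μ.condMutualInfo_comp_eq_condEntropy_sub_condEntropy,
    μ.condEntropy_jointObs_eq_sum hCI]
  have hmodular :=
    Finset.sum_union_inter (s₁ := A) (s₂ := B) (f := fun i => μ.condEntropy (Y i) X)
  linarith [μ.condEntropy_jointObs_union_add_inter_le Y (fun ω => f (X ω)) A B]
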